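/- If f: ℂ → ℂ satisfies f(conj(z)) = conj(f(z)) for all z ∈ ℂ and f(ωz) = ω f(z) for all z, ω ∈ ℂ with |ω| = 1, then there exists a real-valued function g such that f(z) = z · g(|z|) for all z ∈ ℂ; in particular f(0) = 0. -/

import Mathlib

theorem stmt0 (f : ℂ → ℂ)
    (h1 : ∀ z : ℂ, f (starRingEnd ℂ z) = starRingEnd ℂ (f z))
    (h2 : ∀ ω z : ℂ, ‖ω‖ = 1 → f (ω * z) = ω * f z) :
    ∃ g : ℝ → ℝ, (∀ z : ℂ, f z = z * (g (‖z‖) : ℝ)) ∧ f 0 = 0 := by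
  have f0 : f 0 = 0 := by
    have h : f 0 = -f 0 := by simpa using h2 (-1) 0 (by simp)
    linear_combination h / 2
  refine ⟨fun r => (f r).re / r, ?_, f0⟩
  intro z
  by_cases hz : z = 0
  · simp [hz, f0]
  · have habs : ‖z‖ ≠ 0 := by simpa using hz
    have hω : ‖z / (‖z‖ : ℂ)‖ = 1 := by
      simp [map_div₀, habs]
    have hz' : (z / (‖z‖ : ℂ)) * (‖z‖ : ℂ) = z :=
      div_mul_cancel₀ z (by exact_mod_cast habs)
    have key := h2 (z / (‖z‖ : ℂ)) (‖z‖ : ℂ) hω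
    rw [hz'] at key
    have hre : ((f (‖z‖)).re : ℂ) = f (‖z‖) := by
      apply Complex.conj_eq_iff_re.mp
      rw [← h1]
      simp [Complex.conj_ofReal]
    rw [key, ← hre]
    push_cast
    field_simp
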